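/- Let η > 0, γ > 0, r₀ ≥ γ, σ ∈ ℝ, T ∈ ℝ, and let A(t) := (1+γ/η)e^{η(t−T)} − γ/η and let C be the explicit mean-field-control function C(t) := K₁′(t−T) + K₂′(e^{η(t−T)}−1) + K₃′(log((γ+η)e^{η(t−T)}+r₀−γ) − log(η+r₀)) + K₄′(e^{η(t−T)}log((γ+η)e^{η(t−T)}+r₀−γ) − log(r₀+η)) + γ∫_t^T logΓ(((γ+η)/γ)e^{η(s−T)})ds, where K₁′ := −γ(σ²/(2η)−1), K₂′ := ((γ+η)/η)(σ²/(2η) − 2 − log γ), K₃′ := (r₀−γ)/η, K₄′ := (γ+η)/η. Set B := −A. Then for every t ∈ ℝ, x > 0 and μ̄ > 0, the function s ↦ A(s)·log x + B(s)·log μ̄ + C(s) is differentiable at t with derivative ∂, and the reduced dynamic programming equation holds: ∂ − ηB(t) − σ²A(t)/2 + (γ+ηA(t))·( log(γ/(r₀ − ηB(t))) + log μ̄ − log x ) + γ·log Γ(1 + ηA(t)/γ) = 0. -/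

import Mathlib

open MeasureTheory Real intervalIntegral

/-! Since `A` solves `A' = ηA + γ`, the `log x` and `log μ̄` terms of the equation cancel against
the feedback term `(γ + ηA)(log μ̄ - log x)`. Differentiating the integral in `C` produces
`-γ log Γ(((γ + η)/γ) e^{η(t-T)})`, which cancels the entropy term because
`1 + ηA/γ = ((γ + η)/γ) e^{η(t-T)}`; what is left is a rational identity in `e^{η(t-T)}`, with
denominator `r₀ - ηB = (γ + η) e^{η(t-T)} + r₀ - γ > 0`. -/

lemma continuousOn_log_Gamma_Ioi : ContinuousOn (fun s => log (Gamma s)) (Set.Ioi 0) :=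
  differentiableOn_Gamma_Ioi.continuousOn.log fun _ hs => (Gamma_pos_of_pos hs).ne'

lemma hasDerivAt_integral_left_of_continuous {f : ℝ → ℝ} (hf : Continuous f) (b t : ℝ) :
    HasDerivAt (fun u => ∫ s in u..b, f s) (-f t) t :=
  integral_hasDerivAt_left (hf.intervalIntegrable t b) (hf.stronglyMeasurableAtFilter _ _)
    hf.continuousAt

lemma hasDerivAt_exp_mul_sub (η T t : ℝ) :
    HasDerivAt (fun s => exp (η * (s - T))) (η * exp (η * (t - T))) t := by
  simpa [mul_comm] using (((hasDerivAt_id t).sub_const T).const_mul η).exp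

lemma hasDerivAt_mfc_C {η γ r₀ T : ℝ} (K₁ K₂ K₃ K₄ c : ℝ) (hc : 0 < c) (t : ℝ)
    (hP : 0 < (γ + η) * exp (η * (t - T)) + r₀ - γ) :
    HasDerivAt (fun s => K₁ * (s - T) + K₂ * (exp (η * (s - T)) - 1)
        + K₃ * (log ((γ + η) * exp (η * (s - T)) + r₀ - γ) - log (η + r₀))
        + K₄ * (exp (η * (s - T)) * log ((γ + η) * exp (η * (s - T)) + r₀ - γ) - log (r₀ + η))
        + γ * ∫ s in s..T, log (Gamma (c * exp (η * (s - T)))))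
      (K₁ + K₂ * (η * exp (η * (t - T)))
        + K₃ * ((γ + η) * (η * exp (η * (t - T))) / ((γ + η) * exp (η * (t - T)) + r₀ - γ))
        + K₄ * (η * exp (η * (t - T)) * log ((γ + η) * exp (η * (t - T)) + r₀ - γ)
          + exp (η * (t - T)) * ((γ + η) * (η * exp (η * (t - T)))
            / ((γ + η) * exp (η * (t - T)) + r₀ - γ)))
        - γ * log (Gamma (c * exp (η * (t - T))))) t := by
  have hE := hasDerivAt_exp_mul_sub η T t
  have hlogP := (((hE.const_mul (γ + η)).add_const r₀).sub_const γ).log hP.ne'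
  have hcont : Continuous fun s => log (Gamma (c * exp (η * (s - T)))) :=
    continuousOn_log_Gamma_Ioi.comp_continuous (by fun_prop) fun _ => mul_pos hc (exp_pos _)
  refine ((((((hasDerivAt_id t).sub_const T).const_mul K₁).add
    ((hE.sub_const 1).const_mul K₂)).add ((hlogP.sub_const _).const_mul K₃)).add
    (((hE.mul hlogP).sub_const _).const_mul K₄)).add
    ((hasDerivAt_integral_left_of_continuous hcont T t).const_mul γ) |>.congr_deriv ?_
  ring

/-- The explicit MFC functions `A`, `B = −A`, `C` satisfy the reduced dynamic programming
equation of the non-LQ jump-control mean-field control problem: at every `t`, for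
`x, μ̄ > 0`, the map `s ↦ A(s) log x + B(s) log μ̄ + C(s)` is differentiable at `t` with
derivative `d` satisfying
`d − ηB(t) − σ²A(t)/2 + (γ+ηA(t))(log(γ/(r₀−ηB(t))) + log μ̄ − log x)
  + γ log Γ(1 + ηA(t)/γ) = 0`. -/
theorem mfc_DPP_equation (η γ r₀ σ T : ℝ) (hη : 0 < η) (hγ : 0 < γ) (hr : γ ≤ r₀)
    (A B C : ℝ → ℝ) (K₁' K₂' K₃' K₄' : ℝ)
    (hA : ∀ t, A t = (1 + γ / η) * Real.exp (η * (t - T)) - γ / η)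
    (hB : ∀ t, B t = -A t)
    (hK₁ : K₁' = -γ * (σ ^ 2 / (2 * η) - 1))
    (hK₂ : K₂' = ((γ + η) / η) * (σ ^ 2 / (2 * η) - 2 - Real.log γ))
    (hK₃ : K₃' = (r₀ - γ) / η)
    (hK₄ : K₄' = (γ + η) / η)
    (hC : ∀ t, C t = K₁' * (t - T) + K₂' * (Real.exp (η * (t - T)) - 1)
        + K₃' * (Real.log ((γ + η) * Real.exp (η * (t - T)) + r₀ - γ) - Real.log (η + r₀))
        + K₄' * (Real.exp (η * (t - T)) *
            Real.log ((γ + η) * Real.exp (η * (t - T)) + r₀ - γ) - Real.log (r₀ + η))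
        + γ * ∫ s in t..T, Real.log (Real.Gamma (((γ + η) / γ) * Real.exp (η * (s - T))))) :
    ∀ t x μbar : ℝ, 0 < x → 0 < μbar →
      ∃ d : ℝ,
        HasDerivAt (fun s : ℝ => A s * Real.log x + B s * Real.log μbar + C s) d t ∧
        d - η * B t - σ ^ 2 * A t / 2
          + (γ + η * A t) * (Real.log (γ / (r₀ - η * B t)) + Real.log μbar - Real.log x)
          + γ * Real.log (Real.Gamma (1 + η * A t / γ)) = 0 := by
  intro t x μbar _ _
  have hP : 0 < (γ + η) * exp (η * (t - T)) + r₀ - γ := by nlinarith [exp_pos (η * (t - T))]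
  have hCd := hasDerivAt_mfc_C K₁' K₂' K₃' K₄' ((γ + η) / γ) (by positivity) t hP
  rw [← funext hC] at hCd
  set E := exp (η * (t - T))
  have hAt : A t = ((γ + η) * E - γ) / η := by rw [hA]; field_simp; ring
  have hAd : HasDerivAt A (γ + η * A t) t := by
    rw [hAt, funext hA]
    refine ((hasDerivAt_exp_mul_sub η T t).const_mul (1 + γ / η)).sub_const (γ / η)
      |>.congr_deriv ?_
    field_simp
    ring
  rw [show B = fun s => -A s from funext hB]
  refine ⟨_, ((hAd.mul_const _).add (hAd.neg.mul_const _)).add hCd, ?_⟩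
  have hr₀B : r₀ - η * -A t = (γ + η) * E + r₀ - γ := by rw [hAt]; field_simp; ring
  have hGamma : 1 + η * A t / γ = (γ + η) / γ * E := by rw [hAt]; field_simp; ring
  beta_reduce
  rw [hr₀B, hGamma, log_div hγ.ne' hP.ne', hAt, hK₁, hK₂, hK₃, hK₄]
  field_simp [hP.ne']
  ring
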